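/- Lemma A.2 (modified bistable forcing): Let 0 < θ ≤ Θ and let W : ℝ → ℝ be C³ satisfying the double-well assumptions on [-1,1]. Fix μ ∈ (0, 1/8) such that W''(u) ∈ [W''(−1)/2, 3W''(−1)/2] for u ∈ [−1−2μ, −1+2μ], W''(u) ∈ [W''(1)/2, 3W''(1)/2] for u ∈ [1−2μ, 1], and W''(u) ∈ [3W''(0)/2, W''(0)/2] for u ∈ [−μ, μ]. Define f̄ : [−1−μ, 1] → ℝ by f̄(u) = Θ⁻¹W'(u) for u ∈ [0,1] ∪ [−1−μ, −1] and f̄(u) = θ⁻¹W'(u) for u ∈ [−1, 0], and set M = θ⁻¹ sup_{u ∈ [−2,2]} |W''(u)|. Then there exist positive constants c, M₂, ε₁ such that for every ε ∈ (0, ε₁) there is a Lipschitz function f̃_ε : [−1−μ, 1] → ℝ with: (a) f̃_ε(u) ≥ f̄(u) for all u ∈ [−1−μ, 1]; (b) f̃_ε(u) ≤ −cε for all u ∈ [2ε|log ε|, 3ε|log ε|], and f̃_ε(u) ≥ cε for all u ∈ [−ε/M, 0]; (c) the Lipschitz constant of f̃_ε on [−1−μ, 1] is at most M₂. -/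

import Mathlib

open Set Filter Topology

noncomputable section

def DoubleWell (W : ℝ → ℝ) : Prop :=
  ContDiff ℝ 3 W ∧
  (∀ u ∈ Set.Icc (-1:ℝ) 1, 0 ≤ W u) ∧
  W (-1) = 0 ∧ W 1 = 0 ∧
  (∀ u ∈ Set.Ioo (-1:ℝ) 1, 0 < W u) ∧
  deriv W (-1) = 0 ∧ deriv W 0 = 0 ∧ deriv W 1 = 0 ∧
  (∀ u ∈ Set.Ioo (-1:ℝ) 0, 0 < deriv W u) ∧
  (∀ u ∈ Set.Ioo (0:ℝ) 1, deriv W u < 0) ∧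
  0 < deriv (deriv W) (-1) ∧ 0 < deriv (deriv W) 1 ∧ deriv (deriv W) 0 < 0

/-!
The perturbation is `f̄ + (c / |log ε|) * ramp L` with `L = ε |log ε|` and `c = -W''(0) / Θ`;
`ramp L` equals `L` on `(-∞, 0]`, has slope `-1` on `[0, L]` and vanishes on `[L, ∞)`.
Since `W' ≥ 0` on `[-1, 0]`, the plateau value `c ε` gives the lower bound left of `0`.
On `[2L, 3L] ⊆ [0, μ]` the perturbation vanishes, and `W'(0) = 0` with `W'' ≤ W''(0) / 2` there
gives `f̄(u) ≤ -c u / 2 ≤ -c ε` because `L ≥ ε`. Each branch of `f̄` is `W'` times a factor at most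
`θ⁻¹`, so `f̄` is `M`-Lipschitz on each of the three intervals, hence on their union; the ramp
adds slope `c / |log ε| ≤ c`.
-/

lemma abs_sub_le_mul_of_Icc_union {f : ℝ → ℝ} {K a p b : ℝ}
    (h₁ : ∀ x ∈ Icc a p, ∀ y ∈ Icc a p, |f x - f y| ≤ K * |x - y|)
    (h₂ : ∀ x ∈ Icc p b, ∀ y ∈ Icc p b, |f x - f y| ≤ K * |x - y|) :
    ∀ x ∈ Icc a b, ∀ y ∈ Icc a b, |f x - f y| ≤ K * |x - y| := by
  intro x hx y hy
  wlog hxy : x ≤ y generalizing x y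
  · rw [abs_sub_comm, abs_sub_comm x]
    exact this y hy x hx (le_of_not_ge hxy)
  rcases le_total y p with hyp | hpy
  · exact h₁ x ⟨hx.1, hxy.trans hyp⟩ y ⟨hx.1.trans hxy, hyp⟩
  rcases le_total p x with hpx | hxp
  · exact h₂ x ⟨hpx, hxy.trans hy.2⟩ y ⟨hpx.trans hxy, hy.2⟩
  calc |f x - f y| ≤ |f x - f p| + |f p - f y| := abs_sub_le _ _ _
    _ ≤ K * |x - p| + K * |p - y| :=
        add_le_add (h₁ x ⟨hx.1, hxp⟩ p ⟨hx.1.trans hxp, le_rfl⟩)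
          (h₂ p ⟨le_rfl, hpy.trans hy.2⟩ y ⟨hpy, hy.2⟩)
    _ = K * |x - y| := by
        rw [abs_of_nonpos (sub_nonpos.2 hxp), abs_of_nonpos (sub_nonpos.2 hpy),
          abs_of_nonpos (sub_nonpos.2 hxy)]
        ring

lemma abs_sub_le_of_eqOn_const_mul {f g : ℝ → ℝ} {s : Set ℝ} {a A K : ℝ} (ha : 0 ≤ a)
    (haA : a ≤ A) (hg : ∀ x ∈ s, ∀ y ∈ s, |g x - g y| ≤ K * |x - y|)
    (hf : ∀ x ∈ s, f x = a * g x) :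
    ∀ x ∈ s, ∀ y ∈ s, |f x - f y| ≤ A * K * |x - y| := by
  intro x hx y hy
  rw [hf x hx, hf y hy, ← mul_sub, abs_mul, abs_of_nonneg ha, mul_assoc]
  exact mul_le_mul haA (hg x hx y hy) (abs_nonneg _) (ha.trans haA)

lemma abs_sub_le_of_piecewise_const_mul {f g : ℝ → ℝ} {θ Θ K μ : ℝ} (hθ : 0 < θ) (hθΘ : θ ≤ Θ)
    (hμ : 0 ≤ μ) (hg : ∀ x ∈ Icc (-1 - μ) 1, ∀ y ∈ Icc (-1 - μ) 1, |g x - g y| ≤ K * |x - y|)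
    (hf₁ : ∀ u ∈ Icc (0:ℝ) 1 ∪ Icc (-1 - μ) (-1), f u = Θ⁻¹ * g u)
    (hf₂ : ∀ u ∈ Icc (-1:ℝ) 0, f u = θ⁻¹ * g u) :
    ∀ x ∈ Icc (-1 - μ) 1, ∀ y ∈ Icc (-1 - μ) 1, |f x - f y| ≤ θ⁻¹ * K * |x - y| := by
  have hΘ : Θ⁻¹ ≤ θ⁻¹ := inv_anti₀ hθ hθΘ
  have hΘ₀ : 0 ≤ Θ⁻¹ := inv_nonneg.2 (hθ.le.trans hθΘ)
  have hg_mono {a b : ℝ} (hab : Icc a b ⊆ Icc (-1 - μ) 1) :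
      ∀ x ∈ Icc a b, ∀ y ∈ Icc a b, |g x - g y| ≤ K * |x - y| :=
    fun x hx y hy ↦ hg x (hab hx) y (hab hy)
  refine abs_sub_le_mul_of_Icc_union (p := -1) ?_ (abs_sub_le_mul_of_Icc_union (p := 0) ?_ ?_)
  · exact abs_sub_le_of_eqOn_const_mul hΘ₀ hΘ (hg_mono (Icc_subset_Icc le_rfl (by norm_num)))
      fun u hu ↦ hf₁ u (Or.inr hu)
  · exact abs_sub_le_of_eqOn_const_mul (inv_nonneg.2 hθ.le) le_rfl
      (hg_mono (Icc_subset_Icc (by linarith) (by norm_num))) hf₂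
  · exact abs_sub_le_of_eqOn_const_mul hΘ₀ hΘ (hg_mono (Icc_subset_Icc (by linarith) le_rfl))
      fun u hu ↦ hf₁ u (Or.inl hu)

lemma le_iSup_Icc_of_continuousOn {g : ℝ → ℝ} {a b x : ℝ} (hg : ContinuousOn g (Icc a b))
    (hx : x ∈ Icc a b) : g x ≤ ⨆ u : Icc a b, g u :=
  le_ciSup (f := fun u : Icc a b ↦ g u)
    (by simpa only [image_eq_range] using isCompact_Icc.bddAbove_image hg) ⟨x, hx⟩

lemma abs_sub_le_iSup_abs_deriv_mul {g : ℝ → ℝ} {a b : ℝ} (hg : Differentiable ℝ g)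
    (hg' : Continuous (deriv g)) :
    ∀ x ∈ Icc a b, ∀ y ∈ Icc a b, |g x - g y| ≤ (⨆ u : Icc a b, |deriv g u|) * |x - y| :=
  fun x hx y hy ↦ by
    simpa only [Real.norm_eq_abs] using (convex_Icc a b).norm_image_sub_le_of_norm_deriv_le
      (fun z _ ↦ hg z) (fun z hz ↦ by
        simpa only [Real.norm_eq_abs] using
          le_iSup_Icc_of_continuousOn (g := fun x ↦ |deriv g x|) hg'.abs.continuousOn hz) hy hx

lemma le_mul_of_deriv_le_of_map_zero {g : ℝ → ℝ} {b C : ℝ} (hg : Differentiable ℝ g)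
    (hg₀ : g 0 = 0) (hC : ∀ x ∈ Icc 0 b, deriv g x ≤ C) : ∀ u ∈ Icc 0 b, g u ≤ C * u := by
  intro u hu
  have := (convex_Icc 0 b).image_sub_le_mul_sub_of_deriv_le hg.continuous.continuousOn
    hg.differentiableOn (fun x hx ↦ hC x (interior_subset hx)) 0 ⟨le_rfl, hu.1.trans hu.2⟩ u hu hu.1
  simpa [hg₀] using this

lemma nonneg_of_mem_Icc_of_pos_on_Ioo {g : ℝ → ℝ} {a b u : ℝ} (ha : 0 ≤ g a) (hb : 0 ≤ g b)
    (hpos : ∀ x ∈ Ioo a b, 0 < g x) (hu : u ∈ Icc a b) : 0 ≤ g u := by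
  rcases hu.1.eq_or_lt with rfl | h₁
  · exact ha
  rcases hu.2.eq_or_lt with rfl | h₂
  · exact hb
  exact (hpos u ⟨h₁, h₂⟩).le

def ramp (L u : ℝ) : ℝ := max 0 (min L (L - u))

lemma ramp_nonneg (L u : ℝ) : 0 ≤ ramp L u := le_max_left _ _

lemma ramp_of_nonpos {L u : ℝ} (hL : 0 ≤ L) (hu : u ≤ 0) : ramp L u = L := by
  rw [ramp, min_eq_left (by linarith), max_eq_right hL]

lemma ramp_of_le {L u : ℝ} (hu : L ≤ u) : ramp L u = 0 :=
  max_eq_left ((min_le_right _ _).trans (sub_nonpos.2 hu))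

lemma abs_ramp_sub_ramp_le (L u v : ℝ) : |ramp L u - ramp L v| ≤ |u - v| :=
  calc |ramp L u - ramp L v| ≤ |min L (L - u) - min L (L - v)| := by
        rw [ramp, ramp, max_comm 0, max_comm 0]
        exact abs_max_sub_max_le_abs _ _ _
    _ ≤ max |L - L| |L - u - (L - v)| := abs_min_sub_min_le_max _ _ _ _
    _ = |u - v| := by
        rw [sub_self, abs_zero, max_eq_right (abs_nonneg _), sub_sub_sub_cancel_left,
          abs_sub_comm]

theorem exists_forcing_perturbation {f : ℝ → ℝ} {μ c K ε : ℝ} (hc : 0 < c) (hK : 0 < K)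
    (hf_nonneg : ∀ u ∈ Icc (-1:ℝ) 0, 0 ≤ f u) (hf_neg : ∀ u ∈ Icc 0 μ, f u ≤ -c * u / 2)
    (hf_lip : ∀ u ∈ Icc (-1 - μ) (1:ℝ), ∀ v ∈ Icc (-1 - μ) (1:ℝ), |f u - f v| ≤ K * |u - v|)
    (hε : 0 < ε) (hlog : 1 ≤ |Real.log ε|) (hεμ : 3 * (ε * |Real.log ε|) ≤ μ) (hεK : ε ≤ K) :
    ∃ ftil : ℝ → ℝ,
      (∀ u ∈ Icc (-1 - μ) (1:ℝ), f u ≤ ftil u) ∧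
      (∀ u ∈ Icc (2 * ε * |Real.log ε|) (3 * ε * |Real.log ε|), ftil u ≤ -c * ε) ∧
      (∀ u ∈ Icc (-ε / K) (0:ℝ), c * ε ≤ ftil u) ∧
      (∀ u ∈ Icc (-1 - μ) (1:ℝ), ∀ v ∈ Icc (-1 - μ) (1:ℝ),
        |ftil u - ftil v| ≤ (K + c) * |u - v|) := by
  set L := ε * |Real.log ε|
  have hεL : ε ≤ L := le_mul_of_one_le_right hε.le hlog
  have hslope₀ : 0 ≤ c / |Real.log ε| := by positivity
  have hslope : c / |Real.log ε| ≤ c := div_le_self hc.le hlog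
  refine ⟨fun u ↦ f u + c / |Real.log ε| * ramp L u, fun u _ ↦ ?_, fun u hu ↦ ?_,
    fun u hu ↦ ?_, fun u hu v hv ↦ ?_⟩
  · exact le_add_of_nonneg_right (mul_nonneg hslope₀ (ramp_nonneg L u))
  · dsimp only
    rw [ramp_of_le (by linarith [hu.1]), mul_zero, add_zero]
    calc f u ≤ -c * u / 2 := hf_neg u ⟨by linarith [hu.1], by linarith [hu.2]⟩
      _ ≤ -c * ε := by nlinarith [hu.1]
  · have hu₁ : -1 ≤ u := le_trans (by rw [neg_div, neg_le_neg_iff, div_le_one hK]; exact hεK) hu.1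
    have hplateau : c / |Real.log ε| * (ε * |Real.log ε|) = c * ε := by
      field_simp [(zero_lt_one.trans_le hlog).ne']
    dsimp only
    rw [ramp_of_nonpos (hε.le.trans hεL) hu.2, hplateau]
    linarith [hf_nonneg u ⟨hu₁, hu.2⟩]
  · calc |f u + c / |Real.log ε| * ramp L u - (f v + c / |Real.log ε| * ramp L v)|
        ≤ |f u - f v| + c / |Real.log ε| * |ramp L u - ramp L v| := by
          rw [add_sub_add_comm, ← mul_sub, ← abs_of_nonneg hslope₀, ← abs_mul,
            abs_of_nonneg hslope₀]
          exact abs_add_le _ _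
      _ ≤ K * |u - v| + c * |u - v| :=
          add_le_add (hf_lip u hu v hv)
            (mul_le_mul hslope (abs_ramp_sub_ramp_le L u v) (abs_nonneg _) hc.le)
      _ = (K + c) * |u - v| := by ring

lemma eventually_small_scale {μ K : ℝ} (hμ : 0 < μ) (hK : 0 < K) :
    ∀ᶠ ε in 𝓝[>] (0:ℝ), 1 ≤ |Real.log ε| ∧ 3 * (ε * |Real.log ε|) ≤ μ ∧ ε ≤ K := by
  have hlog : ∀ᶠ ε in 𝓝[>] (0:ℝ), 1 ≤ |Real.log ε| :=
    (tendsto_abs_atBot_atTop.comp Real.tendsto_log_nhdsGT_zero).eventually_ge_atTop 1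
  have hmul : ∀ᶠ ε in 𝓝[>] (0:ℝ), |ε * Real.log ε| ≤ μ / 3 :=
    nhdsWithin_le_nhds ((Real.continuous_mul_log.abs.tendsto' 0 0 (by simp)).eventually_le_const
      (by positivity))
  have hsmall : ∀ᶠ ε in 𝓝[>] (0:ℝ), ε ≤ K := nhdsWithin_le_nhds (eventually_le_nhds hK)
  filter_upwards [hlog, hmul, hsmall, self_mem_nhdsWithin] with ε hlog hmul hsmall hε
  rw [abs_mul, abs_of_pos (mem_Ioi.1 hε)] at hmul
  exact ⟨hlog, by linarith, hsmall⟩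

theorem modified_bistable_forcing (θ Θ : ℝ) (hθ : 0 < θ) (hθΘ : θ ≤ Θ)
    (W : ℝ → ℝ) (hW : DoubleWell W) (μ : ℝ) (hμ : μ ∈ Set.Ioo (0:ℝ) (1/8))
    (hμ3 : ∀ u ∈ Set.Icc (-μ) μ,
      deriv (deriv W) u ∈ Set.Icc (3 * deriv (deriv W) 0 / 2) (deriv (deriv W) 0 / 2))
    (fbar : ℝ → ℝ)
    (hfbar1 : ∀ u ∈ Set.Icc (0:ℝ) 1 ∪ Set.Icc (-1 - μ) (-1), fbar u = Θ⁻¹ * deriv W u)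
    (hfbar2 : ∀ u ∈ Set.Icc (-1:ℝ) 0, fbar u = θ⁻¹ * deriv W u)
    (M : ℝ) (hM : M = θ⁻¹ * ⨆ u : Set.Icc (-2:ℝ) 2, |deriv (deriv W) (u : ℝ)|) :
    ∃ c > 0, ∃ M₂ > 0, ∃ ε₁ > 0, ∀ ε : ℝ, 0 < ε → ε < ε₁ →
      ∃ ftil : ℝ → ℝ,
        (∀ u ∈ Set.Icc (-1 - μ) (1:ℝ), fbar u ≤ ftil u) ∧
        (∀ u ∈ Set.Icc (2 * ε * |Real.log ε|) (3 * ε * |Real.log ε|), ftil u ≤ -c * ε) ∧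
        (∀ u ∈ Set.Icc (-ε / M) (0:ℝ), c * ε ≤ ftil u) ∧
        (∀ u ∈ Set.Icc (-1 - μ) (1:ℝ), ∀ v ∈ Set.Icc (-1 - μ) (1:ℝ),
          |ftil u - ftil v| ≤ M₂ * |u - v|) := by
  obtain ⟨hW₃, -, -, -, -, hW'_neg_one, hW'_zero, -, hW'_pos, -, -, -, hdd₀⟩ := hW
  obtain ⟨hμ₀, hμ₈⟩ := hμ
  have hΘ : 0 < Θ := hθ.trans_le hθΘ
  have hW₂ : ContDiff ℝ 2 (deriv W) := hW₃.deriv'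
  have hW' : Differentiable ℝ (deriv W) := hW₂.differentiable (by norm_num)
  have hW'' : Continuous (deriv (deriv W)) := hW₂.continuous_deriv (by norm_num)
  set c := -(Θ⁻¹ * deriv (deriv W) 0) with hc_def
  have hc : 0 < c := neg_pos.2 (mul_neg_of_pos_of_neg (inv_pos.2 hΘ) hdd₀)
  have hM₀ : 0 < M := hM ▸ mul_pos (inv_pos.2 hθ) ((abs_pos.2 hdd₀.ne).trans_le
    (le_iSup_Icc_of_continuousOn (g := fun u ↦ |deriv (deriv W) u|) hW''.abs.continuousOn
      (by norm_num)))
  have hsub : Icc (-1 - μ) 1 ⊆ Icc (-2:ℝ) 2 := Icc_subset_Icc (by linarith) (by norm_num)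
  have hfbar_lip := abs_sub_le_of_piecewise_const_mul hθ hθΘ hμ₀.le
    (fun x hx y hy ↦ abs_sub_le_iSup_abs_deriv_mul hW' hW'' x (hsub hx) y (hsub hy)) hfbar1 hfbar2
  rw [← hM] at hfbar_lip
  have hfbar_nonneg (u : ℝ) (hu : u ∈ Icc (-1:ℝ) 0) : 0 ≤ fbar u := by
    rw [hfbar2 u hu]
    exact mul_nonneg (inv_nonneg.2 hθ.le)
      (nonneg_of_mem_Icc_of_pos_on_Ioo hW'_neg_one.ge hW'_zero.ge hW'_pos hu)
  have hfbar_neg (u : ℝ) (hu : u ∈ Icc 0 μ) : fbar u ≤ -c * u / 2 := by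
    have hW'_le := le_mul_of_deriv_le_of_map_zero hW' hW'_zero
      (fun x hx ↦ (hμ3 x ⟨by linarith [hx.1], hx.2⟩).2) u hu
    calc fbar u = Θ⁻¹ * deriv W u := hfbar1 u (Or.inl ⟨hu.1, by linarith [hu.2]⟩)
      _ ≤ Θ⁻¹ * (deriv (deriv W) 0 / 2 * u) := by gcongr
      _ = -c * u / 2 := by rw [hc_def]; ring
  obtain ⟨ε₁, hε₁, hsmall⟩ := (nhdsGT_basis 0).eventually_iff.1 (eventually_small_scale hμ₀ hM₀)
  refine ⟨c, hc, M + c, by positivity, ε₁, hε₁, fun ε hε hεε₁ ↦ ?_⟩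
  obtain ⟨hlog, hεμ, hεM⟩ := hsmall ⟨hε, hεε₁⟩
  exact exists_forcing_perturbation hc hM₀ hfbar_nonneg hfbar_neg hfbar_lip hε hlog hεμ hεM

end
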